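/- Every solution of the homogeneous equation y' + A y = 0 in (W_p^n)^m is of the form y(t) = Y(t)c for a unique c ∈ ℂ^m; consequently the solution space of the homogeneous equation has dimension m. -/

import Mathlib

open MeasureTheory Set Filter Topology intervalIntegral
open scoped ENNReal NNReal Matrix

noncomputable section

/-- Membership in the Sobolev space `W_p^n([a,b];ℂ)`: for `n ≥ 1`, `y ∈ C^{n-1}` on `[a,b]`,
`y^{(n-1)}` is absolutely continuous with a.e. derivative `g ∈ L_p`; `W_p^0 = L_p`. -/
def MemW (p : ℝ≥0∞) (n : ℕ) (a b : ℝ) (y : ℝ → ℂ) : Prop :=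
  match n with
  | 0 => MemLp y p (volume.restrict (Set.Icc a b))
  | Nat.succ k =>
      ContDiffOn ℝ k y (Set.Icc a b) ∧
      ∃ g : ℝ → ℂ, MemLp g p (volume.restrict (Set.Icc a b)) ∧
        ∀ t ∈ Set.Icc a b,
          iteratedDerivWithin k y (Set.Icc a b) t
            = iteratedDerivWithin k y (Set.Icc a b) a + ∫ s in a..t, g s

/-- The Sobolev norm `‖y‖_{n,p} = ∑_{k=0}^{n} ‖y^{(k)}‖_p` on `[a,b]`. -/
def WNorm (p : ℝ≥0∞) (n : ℕ) (a b : ℝ) (y : ℝ → ℂ) : ℝ :=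
  ∑ k ∈ Finset.range (n + 1),
    (eLpNorm (iteratedDerivWithin k y (Set.Icc a b)) p (volume.restrict (Set.Icc a b))).toReal

/-- Componentwise membership in `(W_p^n)^m`. -/
def VMemW (p : ℝ≥0∞) (n : ℕ) (a b : ℝ) {m : ℕ} (y : ℝ → Fin m → ℂ) : Prop :=
  ∀ i, MemW p n a b (fun t => y t i)

/-- Norm on `(W_p^n)^m` (sum of component norms, an equivalent norm). -/
def VNorm (p : ℝ≥0∞) (n : ℕ) (a b : ℝ) {m : ℕ} (y : ℝ → Fin m → ℂ) : ℝ :=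
  ∑ i, WNorm p n a b (fun t => y t i)

/-- Entrywise membership in `(W_p^n)^{m×m}`. -/
def MMemW (p : ℝ≥0∞) (n : ℕ) (a b : ℝ) {m : ℕ} (A : ℝ → Matrix (Fin m) (Fin m) ℂ) : Prop :=
  ∀ i j, MemW p n a b (fun t => A t i j)

/-- Norm on `(W_p^n)^{m×m}`. -/
def MNorm (p : ℝ≥0∞) (n : ℕ) (a b : ℝ) {m : ℕ} (A : ℝ → Matrix (Fin m) (Fin m) ℂ) : ℝ :=
  ∑ i, ∑ j, WNorm p n a b (fun t => A t i j)

/-- `y` solves `y' + A y = f` on `[a,b]` (a.e.; everywhere for `n ≥ 2`), in integral form: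
`y(t) = y(a) + ∫_a^t (f(s) - A(s) y(s)) ds`. -/
def Solves (a b : ℝ) {m : ℕ} (A : ℝ → Matrix (Fin m) (Fin m) ℂ)
    (f y : ℝ → Fin m → ℂ) : Prop :=
  ∀ t ∈ Set.Icc a b, ∀ i, y t i = y a i + ∫ s in a..t, (f s i - (A s *ᵥ y s) i)

/-- The differential expression `(Ly)(t) = y'(t) + A(t) y(t)` on `[a,b]`. -/
def Lop (a b : ℝ) {m : ℕ} (A : ℝ → Matrix (Fin m) (Fin m) ℂ)
    (y : ℝ → Fin m → ℂ) : ℝ → Fin m → ℂ :=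
  fun t i => derivWithin (fun s => y s i) (Set.Icc a b) t + (A t *ᵥ y t) i

/-- `B : (W_p^n)^m → ℂ^r` is linear and bounded w.r.t. the Sobolev norm. -/
def IsBddLin (p : ℝ≥0∞) (n : ℕ) (a b : ℝ) {m r : ℕ}
    (B : (ℝ → Fin m → ℂ) → (Fin r → ℂ)) : Prop :=
  (∀ y z, B (y + z) = B y + B z) ∧ (∀ (c : ℂ) y, B (c • y) = c • B y) ∧
  ∃ K : ℝ, ∀ y, VMemW p n a b y → ‖B y‖ ≤ K * VNorm p n a b y

/-- The characteristic matrix `M(L,B) ∈ ℂ^{r×m}`: its `j`-th column is `B` applied to the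
`j`-th column of the fundamental matrix `Y`. -/
def charM {m r : ℕ} (B : (ℝ → Fin m → ℂ) → (Fin r → ℂ))
    (Y : ℝ → Matrix (Fin m) (Fin m) ℂ) : Matrix (Fin r) (Fin m) ℂ :=
  Matrix.of fun i j => B (fun t k => Y t k j) i

/-- `Y` is the fundamental matrix: `Y' + A Y = 0`, `Y(a) = I`, in integral (entrywise) form. -/
def IsFund (a b : ℝ) {m : ℕ} (A Y : ℝ → Matrix (Fin m) (Fin m) ℂ) : Prop :=
  Y a = 1 ∧ ∀ t ∈ Set.Icc a b, ∀ i j,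
    Y t i j = (1 : Matrix (Fin m) (Fin m) ℂ) i j - ∫ s in a..t, (A s * Y s) i j

/-- The kernel of `(L,B)` has dimension `d`. -/
def KerDim (p : ℝ≥0∞) (n : ℕ) (a b : ℝ) {m r : ℕ}
    (A : ℝ → Matrix (Fin m) (Fin m) ℂ) (B : (ℝ → Fin m → ℂ) → (Fin r → ℂ)) (d : ℕ) : Prop :=
  ∃ φ : Fin d → (ℝ → Fin m → ℂ),
    (∀ i, VMemW p n a b (φ i) ∧ Solves a b A 0 (φ i) ∧ B (φ i) = 0) ∧
    LinearIndependent ℂ (fun i => fun tc : Set.Icc a b => φ i tc) ∧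
    ∀ y, VMemW p n a b y → Solves a b A 0 y → B y = 0 →
      ∃ c : Fin d → ℂ, ∀ t ∈ Set.Icc a b, y t = ∑ i, c i • φ i t

/-- `(f,c)` lies in the range of `(L,B)`. -/
def InRange (p : ℝ≥0∞) (n : ℕ) (a b : ℝ) {m r : ℕ}
    (A : ℝ → Matrix (Fin m) (Fin m) ℂ) (B : (ℝ → Fin m → ℂ) → (Fin r → ℂ))
    (w : (ℝ → Fin m → ℂ) × (Fin r → ℂ)) : Prop :=
  ∃ y, VMemW p n a b y ∧ Solves a b A w.1 y ∧ B y = w.2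

/-- The cokernel of `(L,B)` (in `(W_p^{n-1})^m × ℂ^r`) has dimension `d`. -/
def CokerDim (p : ℝ≥0∞) (n : ℕ) (a b : ℝ) {m r : ℕ}
    (A : ℝ → Matrix (Fin m) (Fin m) ℂ) (B : (ℝ → Fin m → ℂ) → (Fin r → ℂ)) (d : ℕ) : Prop :=
  ∃ v : Fin d → (ℝ → Fin m → ℂ) × (Fin r → ℂ),
    (∀ i, VMemW p (n - 1) a b (v i).1) ∧
    (∀ c : Fin d → ℂ, InRange p n a b A B (∑ i, c i • v i) → c = 0) ∧
    ∀ w : (ℝ → Fin m → ℂ) × (Fin r → ℂ), VMemW p (n - 1) a b w.1 →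
      ∃ c : Fin d → ℂ, InRange p n a b A B (w - ∑ i, c i • v i)

/-! The difference `w = y - Y · y(a)` solves the homogeneous integral equation and vanishes at `a`,
so `‖w t‖ ≤ ∫_a^t g ‖w‖` with the merely integrable kernel `g = ∑ᵢⱼ ‖Aᵢⱼ‖`. Gronwall's argument by
continuous induction along `[a, b]` forces `w = 0`: if `w` vanishes on `[a, t]`, then on a short
interval `[t, u]` with `∫_t^u g < 1` the maximum `M` of `‖w‖` satisfies `M ≤ (∫_t^u g) M`.
Uniqueness of `c` and the independence of the columns of `Y` follow by evaluating at `a`,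
where `Y a = 1`. -/

theorem MeasureTheory.IntegrableOn.intervalIntegrable_of_mem_Icc {E : Type*}
    [NormedAddCommGroup E] {f : ℝ → E} {a b x y : ℝ} (hf : IntegrableOn f (Icc a b))
    (hx : x ∈ Icc a b) (hy : y ∈ Icc a b) : IntervalIntegrable f volume x y :=
  (hf.mono_set (uIcc_subset_Icc hx hy)).intervalIntegrable

section Gronwall

variable {g N : ℝ → ℝ} {a b : ℝ}

theorem intervalIntegrable_mul_of_mem_Icc (hg : IntegrableOn g (Icc a b))
    (hN : ContinuousOn N (Icc a b)) {x y : ℝ} (hx : x ∈ Icc a b) (hy : y ∈ Icc a b) :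
    IntervalIntegrable (fun s => g s * N s) volume x y :=
  (hg.mul_continuousOn hN isCompact_Icc).intervalIntegrable_of_mem_Icc hx hy

theorem eqOn_zero_of_le_integral_mul_of_integral_lt_one (hab : a ≤ b)
    (hg : IntegrableOn g (Icc a b)) (hg0 : ∀ s ∈ Icc a b, 0 ≤ g s) (hg1 : ∫ s in a..b, g s < 1)
    (hN : ContinuousOn N (Icc a b)) (hN0 : ∀ t ∈ Icc a b, 0 ≤ N t)
    (hle : ∀ t ∈ Icc a b, N t ≤ ∫ s in a..t, g s * N s) :
    EqOn N 0 (Icc a b) := by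
  obtain ⟨v, hv, hmax⟩ := isCompact_Icc.exists_isMaxOn (nonempty_Icc.2 hab) hN
  have hbound : ∀ t ∈ Icc a b, N t ≤ (∫ s in a..b, g s) * N v := fun t ht => calc
    N t ≤ ∫ s in a..t, g s * N s := hle t ht
    _ ≤ ∫ s in a..t, g s * N v :=
      integral_mono_on ht.1 (intervalIntegrable_mul_of_mem_Icc hg hN (left_mem_Icc.2 hab) ht)
        ((hg.intervalIntegrable_of_mem_Icc (left_mem_Icc.2 hab) ht).mul_const _)
        fun s hs => mul_le_mul_of_nonneg_left (hmax (Icc_subset_Icc_right ht.2 hs))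
          (hg0 s (Icc_subset_Icc_right ht.2 hs))
    _ = (∫ s in a..t, g s) * N v := integral_mul_const _ _
    _ ≤ (∫ s in a..b, g s) * N v := by
      gcongr
      · exact hN0 v hv
      · exact integral_mono_interval le_rfl ht.1 ht.2
          ((ae_restrict_iff' measurableSet_Ioc).2
            (ae_of_all _ fun s hs => hg0 s (Ioc_subset_Icc_self hs)))
          (hg.intervalIntegrable_of_mem_Icc (left_mem_Icc.2 hab) (right_mem_Icc.2 hab))
  have hNv : N v = 0 := by
    have := hbound v hv
    nlinarith [hN0 v hv]
  intro t ht
  exact le_antisymm (by simpa [hNv] using hbound t ht) (hN0 t ht)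

theorem eqOn_zero_of_le_integral_mul
    (hg : IntegrableOn g (Icc a b)) (hg0 : ∀ s ∈ Icc a b, 0 ≤ g s)
    (hN : ContinuousOn N (Icc a b)) (hN0 : ∀ t ∈ Icc a b, 0 ≤ N t)
    (hle : ∀ t ∈ Icc a b, N t ≤ ∫ s in a..t, g s * N s) :
    EqOn N 0 (Icc a b) := by
  rcases lt_or_ge b a with hba | hab
  · simp [Icc_eq_empty_of_lt hba]
  refine IsClosed.Icc_subset_of_forall_mem_nhdsGT_of_Icc_subset (s := {t | N t = 0}) ?_ ?_ ?_
  · rw [inter_comm]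
    exact hN.preimage_isClosed_of_isClosed isClosed_Icc isClosed_singleton
  · exact le_antisymm (by simpa using hle a (left_mem_Icc.2 hab)) (hN0 a (left_mem_Icc.2 hab))
  · intro t ht hzero
    have htI : t ∈ Icc a b := Ico_subset_Icc_self ht
    have hsmall : Tendsto (fun u => ∫ s in t..u, g s) (𝓝[>] t) (𝓝 0) := by
      have hcont := continuousOn_primitive_interval'
        (hg.intervalIntegrable_of_mem_Icc htI (right_mem_Icc.2 (ht.1.trans ht.2.le)))
        left_mem_uIcc t left_mem_uIcc
      rw [uIcc_of_le ht.2.le] at hcont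
      simpa using (hcont.mono_of_mem_nhdsWithin (Icc_mem_nhdsGT ht.2)).tendsto
    filter_upwards [hsmall.eventually_lt_const one_pos, Ioc_mem_nhdsGT ht.2] with u hu htu
    have hsub : Icc t u ⊆ Icc a b := Icc_subset_Icc ht.1 htu.2
    have hle' : ∀ r ∈ Icc t u, N r ≤ ∫ s in t..r, g s * N s := by
      intro r hr
      have hrI := hsub hr
      have hinit : ∫ s in a..t, g s * N s = 0 := by
        rw [integral_congr (g := fun _ => 0) fun s hs => ?_, intervalIntegral.integral_zero]
        rw [uIcc_of_le ht.1] at hs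
        simp [show N s = 0 from hzero hs]
      rw [← zero_add (∫ s in t..r, g s * N s), ← hinit, integral_add_adjacent_intervals
        (intervalIntegrable_mul_of_mem_Icc hg hN (left_mem_Icc.2 (ht.1.trans htI.2)) htI)
        (intervalIntegrable_mul_of_mem_Icc hg hN htI hrI)]
      exact hle r hrI
    exact eqOn_zero_of_le_integral_mul_of_integral_lt_one htu.1.le (hg.mono_set hsub)
      (fun s hs => hg0 s (hsub hs)) hu (hN.mono hsub) (fun s hs => hN0 s (hsub hs)) hle'
      (right_mem_Icc.2 htu.1.le)

end Gronwall

theorem Matrix.norm_mulVec_apply_le {l n α : Type*} [Fintype n] [SeminormedRing α]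
    (A : Matrix l n α) (v : n → α) (i : l) : ‖(A *ᵥ v) i‖ ≤ (∑ j, ‖A i j‖) * ‖v‖ := calc
  ‖(A *ᵥ v) i‖ = ‖∑ j, A i j * v j‖ := rfl
  _ ≤ ∑ j, ‖A i j‖ * ‖v j‖ := (norm_sum_le _ _).trans (Finset.sum_le_sum fun _ _ => norm_mul_le _ _)
  _ ≤ ∑ j, ‖A i j‖ * ‖v‖ :=
    Finset.sum_le_sum fun j _ => mul_le_mul_of_nonneg_left (norm_le_pi_norm v j) (norm_nonneg _)
  _ = (∑ j, ‖A i j‖) * ‖v‖ := (Finset.sum_mul _ _ _).symm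

theorem MeasureTheory.IntegrableOn.mulVec_apply {l n R : Type*} [Fintype n] [NormedRing R]
    {A : ℝ → Matrix l n R} {v : ℝ → n → R} {s : Set ℝ} (hs : IsCompact s)
    (hA : ∀ i j, IntegrableOn (fun t => A t i j) s) (hv : ContinuousOn v s) (i : l) :
    IntegrableOn (fun t => (A t *ᵥ v t) i) s :=
  integrable_finsetSum _ fun j _ => (hA i j).mul_continuousOn (continuousOn_pi.1 hv j) hs

section MemW

variable {p : ℝ≥0∞} {n : ℕ} {a b : ℝ} {f : ℝ → ℂ}

theorem MemW.continuousOn (hn : n ≠ 0) (h : MemW p n a b f) : ContinuousOn f (Icc a b) := by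
  cases n with
  | zero => exact absurd rfl hn
  | succ k => exact h.1.continuousOn

theorem MemW.integrableOn (hp : 1 ≤ p) (h : MemW p n a b f) : IntegrableOn f (Icc a b) := by
  cases n with
  | zero => exact h.integrable hp
  | succ k => exact h.1.continuousOn.integrableOn_Icc

end MemW

section Solves

variable {a b : ℝ} {m : ℕ} {A : ℝ → Matrix (Fin m) (Fin m) ℂ}

theorem Solves.sub {f₁ f₂ y₁ y₂ : ℝ → Fin m → ℂ}
    (h₁ : Solves a b A f₁ y₁) (h₂ : Solves a b A f₂ y₂)
    (hi₁ : ∀ i, IntegrableOn (fun s => f₁ s i - (A s *ᵥ y₁ s) i) (Icc a b))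
    (hi₂ : ∀ i, IntegrableOn (fun s => f₂ s i - (A s *ᵥ y₂ s) i) (Icc a b)) :
    Solves a b A (f₁ - f₂) (y₁ - y₂) := by
  intro t ht i
  have ha : a ∈ Icc a b := left_mem_Icc.2 (ht.1.trans ht.2)
  simp only [Pi.sub_apply, Matrix.mulVec_sub]
  rw [h₁ t ht i, h₂ t ht i, add_sub_add_comm, ← integral_sub
    ((hi₁ i).intervalIntegrable_of_mem_Icc ha ht) ((hi₂ i).intervalIntegrable_of_mem_Icc ha ht)]
  congr 2 with s
  ring

theorem IsFund.solves_mulVec {Y : ℝ → Matrix (Fin m) (Fin m) ℂ} (hY : IsFund a b A Y)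
    (hAY : ∀ i j, IntegrableOn (fun s => (A s * Y s) i j) (Icc a b))
    (c : Fin m → ℂ) : Solves a b A 0 (fun t => Y t *ᵥ c) := by
  intro t ht i
  have ha : a ∈ Icc a b := left_mem_Icc.2 (ht.1.trans ht.2)
  have hint : ∫ s in a..t, (A s *ᵥ (Y s *ᵥ c)) i = ∑ j, (∫ s in a..t, (A s * Y s) i j) * c j := by
    simp only [Matrix.mulVec_mulVec, ← intervalIntegral.integral_mul_const]
    rw [← intervalIntegral.integral_finsetSum fun j _ =>
      ((hAY i j).intervalIntegrable_of_mem_Icc ha ht).mul_const (c j)]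
    rfl
  calc (Y t *ᵥ c) i
      = ∑ j, ((1 : Matrix (Fin m) (Fin m) ℂ) i j - ∫ s in a..t, (A s * Y s) i j) * c j := by
        simp only [← hY.2 t ht i]; rfl
    _ = c i - ∫ s in a..t, (A s *ᵥ (Y s *ᵥ c)) i := by
        rw [hint]
        simp [sub_mul, Finset.sum_sub_distrib, Matrix.one_apply]
    _ = (Y a *ᵥ c) i + ∫ s in a..t, ((0 : ℝ → Fin m → ℂ) s i - (A s *ᵥ (Y s *ᵥ c)) i) := by
        simp [hY.1, intervalIntegral.integral_neg, sub_eq_add_neg]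

theorem Solves.eqOn_zero {z : ℝ → Fin m → ℂ} (hz : Solves a b A 0 z) (hz0 : z a = 0)
    (hA : ∀ i j, IntegrableOn (fun t => A t i j) (Icc a b)) (hzc : ContinuousOn z (Icc a b)) :
    EqOn z 0 (Icc a b) := by
  set g : ℝ → ℝ := fun s => ∑ i, ∑ j, ‖A s i j‖
  have hg : IntegrableOn g (Icc a b) :=
    integrable_finsetSum _ fun i _ => integrable_finsetSum _ fun j _ => (hA i j).norm
  have hle : ∀ t ∈ Icc a b, ‖z t‖ ≤ ∫ s in a..t, g s * ‖z s‖ := by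
    intro t ht
    have ha : a ∈ Icc a b := left_mem_Icc.2 (ht.1.trans ht.2)
    refine (pi_norm_le_iff_of_nonneg (integral_nonneg ht.1 fun s _ => by positivity)).2 fun i => ?_
    have hzt : z t i = -∫ s in a..t, (A s *ᵥ z s) i := by
      simpa [hz0, intervalIntegral.integral_neg] using hz t ht i
    calc ‖z t i‖ = ‖∫ s in a..t, (A s *ᵥ z s) i‖ := by rw [hzt, norm_neg]
      _ ≤ ∫ s in a..t, ‖(A s *ᵥ z s) i‖ := norm_integral_le_integral_norm ht.1
      _ ≤ ∫ s in a..t, g s * ‖z s‖ :=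
        integral_mono_on ht.1
          ((IntegrableOn.mulVec_apply isCompact_Icc hA hzc i).intervalIntegrable_of_mem_Icc
            ha ht).norm
          (intervalIntegrable_mul_of_mem_Icc hg hzc.norm ha ht) fun s _ =>
          (Matrix.norm_mulVec_apply_le _ _ i).trans <| mul_le_mul_of_nonneg_right
            (Finset.single_le_sum (f := fun i => ∑ j, ‖A s i j‖) (fun _ _ => by positivity)
              (Finset.mem_univ i)) (norm_nonneg _)
  intro t ht
  exact norm_eq_zero.1 <| eqOn_zero_of_le_integral_mul hg (fun s _ => by positivity) hzc.norm
    (fun _ _ => norm_nonneg _) hle ht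

theorem Solves.eqOn_fund_mulVec {Y : ℝ → Matrix (Fin m) (Fin m) ℂ} {y : ℝ → Fin m → ℂ}
    (hy : Solves a b A 0 y) (hYf : IsFund a b A Y)
    (hA : ∀ i j, IntegrableOn (fun t => A t i j) (Icc a b))
    (hY : ∀ i j, ContinuousOn (fun t => Y t i j) (Icc a b)) (hyc : ContinuousOn y (Icc a b)) :
    ∀ t ∈ Icc a b, y t = Y t *ᵥ y a := by
  have hAv : ∀ v : ℝ → Fin m → ℂ, ContinuousOn v (Icc a b) →
      ∀ i, IntegrableOn (fun s => (0 : ℝ → Fin m → ℂ) s i - (A s *ᵥ v s) i) (Icc a b) :=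
    fun v hv i => by simpa using (IntegrableOn.mulVec_apply isCompact_Icc hA hv i).neg
  have hYc : ContinuousOn (fun t => Y t *ᵥ y a) (Icc a b) :=
    continuousOn_pi.2 fun i => by
      simp only [Matrix.mulVec, dotProduct]
      exact continuousOn_finsetSum _ fun j _ => (hY i j).mul continuousOn_const
  have hYsol := hYf.solves_mulVec (fun i j => IntegrableOn.mulVec_apply isCompact_Icc hA
    (continuousOn_pi.2 fun k => hY k j) i) (y a)
  have hsol := hy.sub hYsol (hAv y hyc) (hAv _ hYc)
  rw [sub_self] at hsol
  have hzero := hsol.eqOn_zero (by simp [hYf.1]) hA (hyc.sub hYc)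
  exact fun t ht => sub_eq_zero.1 (hzero ht)

end Solves

theorem homogeneous_solutions_general (a b : ℝ) (hab : a < b)
    (m n : ℕ) (hn : 1 ≤ n) (p : ℝ≥0∞) (hp : 1 ≤ p)
    (A : ℝ → Matrix (Fin m) (Fin m) ℂ) (hA : MMemW p (n - 1) a b A)
    (Y : ℝ → Matrix (Fin m) (Fin m) ℂ) (hY : MMemW p n a b Y) (hYf : IsFund a b A Y) :
    (∀ y : ℝ → Fin m → ℂ, VMemW p n a b y → Solves a b A 0 y →
        ∃! c : Fin m → ℂ, ∀ t ∈ Set.Icc a b, y t = (Y t).mulVec c) ∧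
    LinearIndependent ℂ (fun j : Fin m => fun tc : Set.Icc a b => fun i => Y tc i j) := by
  have ha : a ∈ Icc a b := left_mem_Icc.2 hab.le
  have hAint : ∀ i j, IntegrableOn (fun t => A t i j) (Icc a b) :=
    fun i j => (hA i j).integrableOn hp
  have hYcont : ∀ i j, ContinuousOn (fun t => Y t i j) (Icc a b) :=
    fun i j => (hY i j).continuousOn (by omega)
  refine ⟨fun y hyW hy => ⟨y a, hy.eqOn_fund_mulVec hYf hAint hYcont
    (continuousOn_pi.2 fun i => (hyW i).continuousOn (by omega)), fun c hc => ?_⟩, ?_⟩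
  · simpa [hYf.1] using (hc a ha).symm
  · rw [Fintype.linearIndependent_iff]
    intro c hc j
    simpa [hYf.1, Matrix.one_apply] using congrFun (congrFun hc ⟨a, ha⟩) j

/-- every solution of `y' + A y = 0` in `(W_p^n)^m` is `y(t) = Y(t)c` for a
unique `c ∈ ℂ^m`; consequently the solution space of the homogeneous equation has
dimension `m` (the columns of `Y` are linearly independent on `[a,b]`). -/
theorem homogeneous_solutions (a b : ℝ) (hab : a < b)
    (m n : ℕ) (hm : 1 ≤ m) (hn : 1 ≤ n) (p : ℝ≥0∞) (hp : 1 ≤ p)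
    (A : ℝ → Matrix (Fin m) (Fin m) ℂ) (hA : MMemW p (n - 1) a b A)
    (Y : ℝ → Matrix (Fin m) (Fin m) ℂ) (hY : MMemW p n a b Y) (hYf : IsFund a b A Y) :
    (∀ y : ℝ → Fin m → ℂ, VMemW p n a b y → Solves a b A 0 y →
        ∃! c : Fin m → ℂ, ∀ t ∈ Set.Icc a b, y t = (Y t).mulVec c) ∧
    LinearIndependent ℂ (fun j : Fin m => fun tc : Set.Icc a b => fun i => Y tc i j) :=
  homogeneous_solutions_general a b hab m n hn p hp A hA Y hY hYf
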